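/- Let k be a nonnegative integer, let G be one of the five separable extension graphs P_4, P (the banner: a four-cycle with one pendant vertex), F (the chair: a path on four vertices with one extra vertex adjacent to a middle vertex of the path), complement(P), or complement(F), and let H = (S,K,R) be a G-spider with nonempty head R. Then H is not a minimal (1,k)-polar obstruction. -/

import Mathlib

open SimpleGraph

universe u v

/-! ### Basic predicates -/

/-- `B` induces a disjoint union of complete graphs in `G` (i.e. `G[B]` is a cluster). -/
def IsClusterSet {V : Type*} (G : SimpleGraph V) (B : Set V) : Prop :=
  ∀ ⦃u w x : V⦄, u ∈ B → w ∈ B → x ∈ B → G.Adj u w → G.Adj w x → u ≠ x → G.Adj u x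

/-- `A` induces a complete multipartite graph in `G`
(the complement of `G[A]` is a disjoint union of cliques). -/
def IsCompleteMultipartiteSet {V : Type*} (G : SimpleGraph V) (A : Set V) : Prop :=
  ∀ ⦃u w x : V⦄, u ∈ A → w ∈ A → x ∈ A → u ≠ w → w ≠ x → u ≠ x →
    ¬ G.Adj u w → ¬ G.Adj w x → ¬ G.Adj u x

/-- `A` is an independent set of `G`. -/
def IsIndepSet {V : Type*} (G : SimpleGraph V) (A : Set V) : Prop :=
  ∀ ⦃u w : V⦄, u ∈ A → w ∈ A → ¬ G.Adj u w

/-- `G[B]` is a disjoint union of at most `k` complete graphs. -/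
def IsClusterSetLE {V : Type*} (G : SimpleGraph V) (k : ℕ) (B : Set V) : Prop :=
  ∃ g : B → Fin k, ∀ u w : B, u ≠ w → (G.Adj u w ↔ g u = g w)

/-- `G[A]` is a complete multipartite graph with at most `s` parts. -/
def IsCompleteMultipartiteSetLE {V : Type*} (G : SimpleGraph V) (s : ℕ) (A : Set V) : Prop :=
  ∃ f : A → Fin s, ∀ u w : A, G.Adj u w ↔ f u ≠ f w

/-! ### Polarity properties -/

/-- `G` is unipolar: a partition `(A, Aᶜ)` with `A` a clique and `G[Aᶜ]` a cluster. -/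
def Unipolar {V : Type*} (G : SimpleGraph V) : Prop :=
  ∃ A : Set V, G.IsClique A ∧ IsClusterSet G Aᶜ

/-- `G` is monopolar ((1,∞)-polar). -/
def Monopolar {V : Type*} (G : SimpleGraph V) : Prop :=
  ∃ A : Set V, _root_.IsIndepSet G A ∧ IsClusterSet G Aᶜ

/-- `G` is polar ((∞,∞)-polar). -/
def Polar {V : Type*} (G : SimpleGraph V) : Prop :=
  ∃ A : Set V, IsCompleteMultipartiteSet G A ∧ IsClusterSet G Aᶜ

/-- `G` is (s,1)-polar. -/
def SOnePolar {V : Type*} (s : ℕ) (G : SimpleGraph V) : Prop :=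
  ∃ A : Set V, IsCompleteMultipartiteSetLE G s A ∧ G.IsClique Aᶜ

/-- `G` is (∞,1)-polar. -/
def InfOnePolar {V : Type*} (G : SimpleGraph V) : Prop :=
  ∃ A : Set V, IsCompleteMultipartiteSet G A ∧ G.IsClique Aᶜ

/-- `G` is (1,k)-polar. -/
def OneKPolar {V : Type*} (k : ℕ) (G : SimpleGraph V) : Prop :=
  ∃ A : Set V, _root_.IsIndepSet G A ∧ IsClusterSetLE G k Aᶜ

/-! ### Minimal obstructions -/

def MinUnipolarObstruction {V : Type*} (G : SimpleGraph V) : Prop :=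
  ¬ Unipolar G ∧ ∀ s : Set V, s ≠ Set.univ → Unipolar (G.induce s)

def MinMonopolarObstruction {V : Type*} (G : SimpleGraph V) : Prop :=
  ¬ Monopolar G ∧ ∀ s : Set V, s ≠ Set.univ → Monopolar (G.induce s)

def MinPolarObstruction {V : Type*} (G : SimpleGraph V) : Prop :=
  ¬ Polar G ∧ ∀ s : Set V, s ≠ Set.univ → Polar (G.induce s)

def MinSOnePolarObstruction {V : Type*} (s : ℕ) (G : SimpleGraph V) : Prop :=
  ¬ SOnePolar s G ∧ ∀ t : Set V, t ≠ Set.univ → SOnePolar s (G.induce t)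

def MinInfOnePolarObstruction {V : Type*} (G : SimpleGraph V) : Prop :=
  ¬ InfOnePolar G ∧ ∀ t : Set V, t ≠ Set.univ → InfOnePolar (G.induce t)

def MinOneKPolarObstruction {V : Type*} (k : ℕ) (G : SimpleGraph V) : Prop :=
  ¬ OneKPolar k G ∧ ∀ t : Set V, t ≠ Set.univ → OneKPolar k (G.induce t)

/-! ### Graph constructions -/

/-- The join of two graphs: all edges added between the summands. -/
def joinG {α β : Type*} (G : SimpleGraph α) (H : SimpleGraph β) : SimpleGraph (α ⊕ β) where
  Adj x y := (G ⊕g H).Adj x y ∨ (x.isLeft ∧ y.isRight) ∨ (x.isRight ∧ y.isLeft)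
  symm := ⟨fun x y h => by
    rcases h with h | ⟨h1, h2⟩ | ⟨h1, h2⟩
    · exact Or.inl ((G ⊕g H).symm.symm x y h)
    · exact Or.inr (Or.inr ⟨h2, h1⟩)
    · exact Or.inr (Or.inl ⟨h2, h1⟩)⟩
  loopless := ⟨fun x h => by
    rcases h with h | ⟨h1, h2⟩ | ⟨h1, h2⟩
    · exact (G ⊕g H).loopless.irrefl x h
    · cases x <;> simp_all
    · cases x <;> simp_all⟩

/-- `K_n`, the complete graph on `n` vertices. -/
def KG (n : ℕ) : SimpleGraph (Fin n) := ⊤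

/-- `n K_1`, the edgeless graph on `n` vertices. -/
def EG (n : ℕ) : SimpleGraph (Fin n) := ⊥

/-- The banner graph `P`: a four-cycle `0 1 2 3` with a pendant vertex `4` adjacent to `0`. -/
def banner : SimpleGraph (Fin 5) :=
  SimpleGraph.fromEdgeSet {s(0, 1), s(1, 2), s(2, 3), s(3, 0), s(0, 4)}

/-- The chair (fork) graph `F`: a path `0 1 2 3` with an extra vertex `4` adjacent to `1`. -/
def chair : SimpleGraph (Fin 5) :=
  SimpleGraph.fromEdgeSet {s(0, 1), s(1, 2), s(2, 3), s(1, 4)}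

/-- `2P_3`. -/
def twoP3 : SimpleGraph (Fin 3 ⊕ Fin 3) := pathGraph 3 ⊕g pathGraph 3

/-- `K_{2,3}`. -/
def K23 : SimpleGraph (Fin 2 ⊕ Fin 3) := completeBipartiteGraph (Fin 2) (Fin 3)

/-- The seven graphs `E1, E2, E3, E7, E10, E11, E12`. -/
def E1 : SimpleGraph (Fin 1 ⊕ (Fin 2 ⊕ Fin 2)) := KG 1 ⊕g (KG 2 ⊕g KG 2)
def E2 : SimpleGraph (Fin 3 ⊕ Fin 3) := pathGraph 3 ⊕g pathGraph 3
def E3 : SimpleGraph (Fin 4 ⊕ Fin 2) := cycleGraph 4 ⊕g EG 2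
def E7 : SimpleGraph (Fin 1 ⊕ (Fin 3 ⊕ Fin 2)) := KG 1 ⊕g (pathGraph 3 ⊕g KG 2)ᶜ
def E10 : SimpleGraph (Fin 1 ⊕ Fin 5) := KG 1 ⊕g cycleGraph 5
def E11 : SimpleGraph (Fin 1 ⊕ Fin 5) := KG 1 ⊕g banner
def E12 : SimpleGraph (Fin 1 ⊕ Fin 5) := KG 1 ⊕g (pathGraph 5)ᶜ

/-! ### P4 structure -/

/-- `W` induces a path on four vertices in `G`. -/
def InducesP4 {V : Type*} (G : SimpleGraph V) (W : Set V) : Prop :=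
  Nonempty (G.induce W ≃g pathGraph 4)

/-- A graph is a cograph if it has no induced `P_4`. -/
def Cograph {V : Type*} (G : SimpleGraph V) : Prop :=
  ∀ W : Set V, ¬ InducesP4 G W

/-- `G` is `P_4`-sparse: any five vertices induce at most one `P_4`. -/
def P4Sparse {V : Type*} (G : SimpleGraph V) : Prop :=
  ∀ s : Set V, s.ncard = 5 → ∀ W₁ W₂ : Set V, W₁ ⊆ s → W₂ ⊆ s →
    InducesP4 G W₁ → InducesP4 G W₂ → W₁ = W₂

/-- `G` is `P_4`-extendible. -/
def P4Extendible {V : Type*} (G : SimpleGraph V) : Prop :=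
  ∀ W : Set V, InducesP4 G W →
    ∀ v₁ v₂ : V, v₁ ∉ W → v₂ ∉ W →
      (∃ W₁ : Set V, InducesP4 G W₁ ∧ v₁ ∈ W₁ ∧ (W₁ ∩ W).Nonempty) →
      (∃ W₂ : Set V, InducesP4 G W₂ ∧ v₂ ∈ W₂ ∧ (W₂ ∩ W).Nonempty) → v₁ = v₂

/-! ### Spiders -/

/-- `(S, K, R)` is a spider partition of `G`. -/
def IsSpiderPartition {V : Type*} (G : SimpleGraph V) (S K R : Set V) : Prop :=
  S ∪ K ∪ R = Set.univ ∧ Disjoint S K ∧ Disjoint S R ∧ Disjoint K R ∧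
  S.ncard = K.ncard ∧ 2 ≤ K.ncard ∧
  G.IsClique K ∧ _root_.IsIndepSet G S ∧
  (∃ f : S → K, Function.Bijective f ∧
    ((∀ s : S, ∀ k : K, G.Adj s k ↔ (f s : V) = k) ∨
     (∀ s : S, ∀ k : K, G.Adj s k ↔ (f s : V) ≠ k))) ∧
  (∀ r ∈ R, ∀ k ∈ K, G.Adj r k) ∧
  (∀ r ∈ R, ∀ s ∈ S, ¬ G.Adj r s)

/-- `G` is a `B`-spider with partition `(S, K, R)`, where `B` is a fixed base graph with
midpoint set `M` and endpoint set `E`: `G` is obtained from a copy of `B` (whose midpoints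
form `K` and whose endpoints form `S`) by adding the set `R` of vertices, each adjacent to
all midpoints and to no endpoint. -/
def IsBaseSpider {n : ℕ} {V : Type*} (B : SimpleGraph (Fin n)) (M E : Set (Fin n))
    (G : SimpleGraph V) (S K R : Set V) : Prop :=
  ∃ f : Fin n → V, Function.Injective f ∧
    (∀ i j : Fin n, G.Adj (f i) (f j) ↔ B.Adj i j) ∧
    K = f '' M ∧ S = f '' E ∧ R = (Set.range f)ᶜ ∧
    (∀ r ∈ R, ∀ x ∈ K, G.Adj r x) ∧
    (∀ r ∈ R, ∀ x ∈ S, ¬ G.Adj r x)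

/-!
Each of the five base graphs has an endpoint `s` whose only neighbour is a midpoint `m`, and as the
head sees midpoints only, `s` is pendant in `H` as well. If `H` were a minimal obstruction, `H - s`
would have a `(1,k)`-polar partition `(A, B)`. If `m ∈ B`, then `s` can join `A`; hence `m ∈ A`,
and every other neighbour of `m`, in particular the whole head, lies in `B`.

For `P_4`, the chair and the co-chair the midpoints form a clique and the endpoints an independent
set. Another midpoint in `B` is adjacent to the whole head, so the cluster `B` forces the head to be
a clique; then `H` is a split graph whose clique side is nonempty, hence `(1,k)`-polar. For the
banner the forced placement puts an induced `P_3` into `B`, and for the co-banner an edge into `A`.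
-/

open Set Function

section OneKPolar

variable {V : Type*} {G : SimpleGraph V} {k : ℕ} {A B C : Set V}

theorem IsClusterSetLE.isClusterSet (h : IsClusterSetLE G k B) : IsClusterSet G B := by
  obtain ⟨g, hg⟩ := h
  intro u w x hu hw hx huw hwx hux
  have h₁ := (hg ⟨u, hu⟩ ⟨w, hw⟩ (Subtype.coe_ne_coe.1 huw.ne)).1 huw
  have h₂ := (hg ⟨w, hw⟩ ⟨x, hx⟩ (Subtype.coe_ne_coe.1 hwx.ne)).1 hwx
  exact (hg ⟨u, hu⟩ ⟨x, hx⟩ (Subtype.coe_ne_coe.1 hux)).2 (h₁.trans h₂)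

theorem IsClusterSetLE.pos (h : IsClusterSetLE G k B) (hB : B.Nonempty) : 0 < k :=
  let ⟨g, _⟩ := h
  (g ⟨_, hB.some_mem⟩).pos

theorem IsClusterSet.isClique_of_forall_adj {w : V} (hB : IsClusterSet G B) (hw : w ∈ B)
    (hC : C ⊆ B) (hCw : ∀ x ∈ C, G.Adj x w) : G.IsClique C :=
  fun _ hx _ hy hxy => hB (hC hx) hw (hC hy) (hCw _ hx) (hCw _ hy).symm hxy

theorem IsIndepSet.mem_diff_of_adj {a v x : V} (hA : _root_.IsIndepSet G A) (ha : a ∈ A)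
    (hvx : v ≠ x) (hva : G.Adj v a) : v ∈ {x}ᶜ \ A :=
  ⟨hvx, fun hv => hA hv ha hva⟩

theorem oneKPolar_of_isClique (hk : 0 < k) (hC : G.IsClique C) (hI : _root_.IsIndepSet G Cᶜ) :
    OneKPolar k G := by
  refine ⟨Cᶜ, hI, ?_⟩
  rw [compl_compl]
  exact ⟨fun _ => ⟨0, hk⟩,
    fun u w huw => iff_of_true (hC u.2 w.2 (Subtype.coe_ne_coe.2 huw)) rfl⟩

theorem OneKPolar.exists_of_induce {t : Set V} (h : OneKPolar k (G.induce t)) :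
    ∃ A : Set V, _root_.IsIndepSet G A ∧ IsClusterSetLE G k (t \ A) := by
  obtain ⟨A, hA, g, hg⟩ := h
  refine ⟨(↑) '' A, ?_, fun x => g ⟨⟨x, x.2.1⟩, fun hx => x.2.2 ⟨_, hx, rfl⟩⟩, ?_⟩
  · rintro _ _ ⟨u, hu, rfl⟩ ⟨w, hw, rfl⟩
    exact hA hu hw
  · intro u w huw
    refine hg ⟨⟨u, u.2.1⟩, _⟩ ⟨⟨w, w.2.1⟩, _⟩ fun h => huw (Subtype.ext ?_)
    exact congrArg (fun z : ↥(Aᶜ) => (z : V)) h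

theorem oneKPolar_of_insert {s : V} (hA : _root_.IsIndepSet G A) (hs : ∀ v ∈ A, ¬ G.Adj s v)
    (hB : IsClusterSetLE G k ({s}ᶜ \ A)) : OneKPolar k G := by
  refine ⟨insert s A, ?_, ?_⟩
  · rintro u w (rfl | hu) (rfl | hw) huw
    · exact huw.ne rfl
    · exact hs w hw huw
    · exact hs u hu huw.symm
    · exact hA hu hw huw
  · rwa [show (insert s A)ᶜ = {s}ᶜ \ A by ext; simp]

theorem not_minOneKPolarObstruction_of_pendant {s m : V} (hsm : ∀ v, G.Adj s v ↔ v = m)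
    (hpolar : ∀ A, _root_.IsIndepSet G A → m ∈ A → IsClusterSetLE G k ({s}ᶜ \ A) →
      OneKPolar k G) :
    ¬ MinOneKPolarObstruction k G := by
  rintro ⟨hG, hmin⟩
  obtain ⟨A, hA, hB⟩ := (hmin {s}ᶜ (compl_ne_univ.2 (singleton_nonempty s))).exists_of_induce
  by_cases hm : m ∈ A
  · exact hG (hpolar A hA hm hB)
  · exact hG (oneKPolar_of_insert hA (fun v hv hsv => hm ((hsm v).1 hsv ▸ hv)) hB)

end OneKPolar

instance : DecidableRel (pathGraph 4).Adj := fun _ _ => decidable_of_iff' _ pathGraph_adj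

instance : DecidableRel banner.Adj := fun _ _ => decidable_of_iff' _ (fromEdgeSet_adj _)

instance : DecidableRel chair.Adj := fun _ _ => decidable_of_iff' _ (fromEdgeSet_adj _)

section Spider

variable {V : Type*} {H : SimpleGraph V} {k n : ℕ} {Bg : SimpleGraph (Fin n)} {M E : Set (Fin n)}
  {S K R : Set V}

theorem spider_adj_iff_of_pendant {f : Fin n → V} (hf : Injective f)
    (hAdj : ∀ i j, H.Adj (f i) (f j) ↔ Bg.Adj i j)
    (hRE : ∀ r ∈ (range f)ᶜ, ∀ x ∈ f '' E, ¬ H.Adj r x) {s m : Fin n} (hs : s ∈ E)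
    (hsm : ∀ j, Bg.Adj s j ↔ j = m) (v : V) :
    H.Adj (f s) v ↔ v = f m := by
  by_cases hv : v ∈ range f
  · obtain ⟨j, rfl⟩ := hv
    rw [hAdj, hsm, hf.eq_iff]
  · exact iff_of_false (fun h => hRE v hv _ (mem_image_of_mem f hs) h.symm)
      (fun h => hv ⟨m, h.symm⟩)

theorem spider_oneKPolar_of_isClique {f : Fin n → V}
    (hAdj : ∀ i j, H.Adj (f i) (f j) ↔ Bg.Adj i j)
    (hRM : ∀ r ∈ (range f)ᶜ, ∀ x ∈ f '' M, H.Adj r x) (hM : Bg.IsClique M)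
    (hMc : _root_.IsIndepSet Bg Mᶜ) (hR : H.IsClique (range f)ᶜ) (hk : 0 < k) :
    OneKPolar k H := by
  refine oneKPolar_of_isClique hk (C := f '' M ∪ (range f)ᶜ) ?_ ?_
  · rintro _ (⟨i, hi, rfl⟩ | hx) _ (⟨j, hj, rfl⟩ | hy) hxy
    · exact (hAdj i j).2 (hM hi hj (ne_of_apply_ne f hxy))
    · exact (hRM _ hy _ ⟨i, hi, rfl⟩).symm
    · exact hRM _ hx _ ⟨j, hj, rfl⟩
    · exact hR hx hy hxy
  · rintro _ _ hx hy
    simp only [mem_compl_iff, mem_union, not_or, not_not] at hx hy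
    obtain ⟨hxM, i, rfl⟩ := hx
    obtain ⟨hyM, j, rfl⟩ := hy
    rw [hAdj]
    exact hMc (fun hi => hxM ⟨i, hi, rfl⟩) (fun hj => hyM ⟨j, hj, rfl⟩)

theorem IsBaseSpider.not_minOneKPolarObstruction_of_isClique
    (hS : IsBaseSpider Bg M E H S K R) (hM : Bg.IsClique M) (hMc : _root_.IsIndepSet Bg Mᶜ)
    {s m i : Fin n} (hsE : s ∈ E) (hsM : s ∉ M) (hsm : ∀ j, Bg.Adj s j ↔ j = m)
    (hiM : i ∈ M) (him : i ≠ m) :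
    ¬ MinOneKPolarObstruction k H := by
  obtain ⟨f, hf, hAdj, rfl, rfl, rfl, hRM, hRE⟩ := hS
  have hmM : m ∈ M := by_contra fun hmM => hMc hsM hmM ((hsm m).2 rfl)
  refine not_minOneKPolarObstruction_of_pendant (spider_adj_iff_of_pendant hf hAdj hRE hsE hsm) ?_
  intro A hA hmA hB
  have hiB : f i ∈ {f s}ᶜ \ A :=
    hA.mem_diff_of_adj hmA (hf.ne (ne_of_mem_of_not_mem hiM hsM)) ((hAdj i m).2 (hM hiM hmM him))
  have hRB : (range f)ᶜ ⊆ {f s}ᶜ \ A := fun r hr =>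
    hA.mem_diff_of_adj hmA (fun h => hr ⟨s, h.symm⟩) (hRM r hr _ (mem_image_of_mem f hmM))
  refine spider_oneKPolar_of_isClique hAdj hRM hM hMc ?_ (hB.pos ⟨_, hiB⟩)
  exact hB.isClusterSet.isClique_of_forall_adj hiB hRB
    fun r hr => hRM r hr _ (mem_image_of_mem f hiM)

theorem IsBaseSpider.not_minOneKPolarObstruction_banner
    (hS : IsBaseSpider banner {0, 1, 3} {2, 4} H S K R) (hR : R.Nonempty) :
    ¬ MinOneKPolarObstruction k H := by
  obtain ⟨f, hf, hAdj, rfl, rfl, rfl, hRM, hRE⟩ := hS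
  obtain ⟨r, hr⟩ := hR
  refine not_minOneKPolarObstruction_of_pendant
    (spider_adj_iff_of_pendant (s := 4) (m := 0) hf hAdj hRE (by simp) (by decide)) ?_
  intro A hA h0A hB
  have hrM : ∀ i ∈ ({0, 1, 3} : Set (Fin 5)), H.Adj r (f i) :=
    fun i hi => hRM r hr _ (mem_image_of_mem f hi)
  have hrB := hA.mem_diff_of_adj h0A (fun h => hr ⟨4, h.symm⟩) (hrM 0 (by simp))
  have hmemB : ∀ i, i ≠ 4 → banner.Adj i 0 → f i ∈ {f 4}ᶜ \ A :=
    fun i hi4 hi0 => hA.mem_diff_of_adj h0A (hf.ne hi4) ((hAdj i 0).2 hi0)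
  have h13 := hB.isClusterSet (hmemB 1 (by decide) (by decide)) hrB
    (hmemB 3 (by decide) (by decide)) (hrM 1 (by simp)).symm (hrM 3 (by simp)) (hf.ne (by decide))
  exact absurd ((hAdj 1 3).1 h13) (by decide)

theorem IsBaseSpider.not_minOneKPolarObstruction_compl_banner
    (hS : IsBaseSpider bannerᶜ {2, 4} {0, 1, 3} H S K R) (hR : R.Nonempty) :
    ¬ MinOneKPolarObstruction k H := by
  obtain ⟨f, hf, hAdj, rfl, rfl, rfl, hRM, hRE⟩ := hS
  obtain ⟨r, hr⟩ := hR
  refine not_minOneKPolarObstruction_of_pendant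
    (spider_adj_iff_of_pendant (s := 0) (m := 2) hf hAdj hRE (by simp) (by decide)) ?_
  intro A hA h2A hB
  have hrM : ∀ i ∈ ({2, 4} : Set (Fin 5)), H.Adj r (f i) :=
    fun i hi => hRM r hr _ (mem_image_of_mem f hi)
  have hrB := hA.mem_diff_of_adj h2A (fun h => hr ⟨0, h.symm⟩) (hrM 2 (by simp))
  have h4B : f 4 ∈ {f 0}ᶜ \ A :=
    hA.mem_diff_of_adj h2A (hf.ne (by decide)) ((hAdj 4 2).2 (by decide))
  -- an endpoint `f i` in `B` next to `f 4` would be adjacent to `r`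
  have hmemA : ∀ i, i ≠ 0 → i ∈ ({0, 1, 3} : Set (Fin 5)) → bannerᶜ.Adj i 4 →
      f i ∈ A := by
    intro i hi0 hiE hi4
    by_contra hiA
    have hir := hB.isClusterSet ⟨hf.ne hi0, hiA⟩ h4B hrB ((hAdj i 4).2 hi4)
      (hrM 4 (by simp)).symm (fun h => hr ⟨i, h⟩)
    exact hRE r hr _ (mem_image_of_mem f hiE) hir.symm
  have h13 : H.Adj (f 1) (f 3) := (hAdj 1 3).2 (by decide)
  exact (hA (hmemA 1 (by decide) (by simp) (by decide)) (hmemA 3 (by decide) (by simp) (by decide))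
    h13).elim

end Spider

theorem stmt_14_general {V : Type*} (k : ℕ) (H : SimpleGraph V) (S K R : Set V)
    (h : IsBaseSpider (pathGraph 4) ({1, 2} : Set (Fin 4)) ({0, 3} : Set (Fin 4)) H S K R ∨
         IsBaseSpider banner ({0, 1, 3} : Set (Fin 5)) ({2, 4} : Set (Fin 5)) H S K R ∨
         IsBaseSpider chair ({1, 2} : Set (Fin 5)) ({0, 3, 4} : Set (Fin 5)) H S K R ∨
         IsBaseSpider bannerᶜ ({2, 4} : Set (Fin 5)) ({0, 1, 3} : Set (Fin 5)) H S K R ∨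
         IsBaseSpider chairᶜ ({0, 3, 4} : Set (Fin 5)) ({1, 2} : Set (Fin 5)) H S K R)
    (hR : R.Nonempty) :
    ¬ MinOneKPolarObstruction k H := by
  rcases h with h | h | h | h | h
  · exact h.not_minOneKPolarObstruction_of_isClique (s := 3) (m := 2) (i := 1)
      (by unfold IsClique Set.Pairwise; decide) (by unfold _root_.IsIndepSet; decide)
      (by simp) (by decide) (by decide) (by simp) (by decide)
  · exact h.not_minOneKPolarObstruction_banner hR
  · exact h.not_minOneKPolarObstruction_of_isClique (s := 3) (m := 2) (i := 1)
      (by unfold IsClique Set.Pairwise; decide) (by unfold _root_.IsIndepSet; decide)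
      (by simp) (by decide) (by decide) (by simp) (by decide)
  · exact h.not_minOneKPolarObstruction_compl_banner hR
  · exact h.not_minOneKPolarObstruction_of_isClique (s := 1) (m := 3) (i := 0)
      (by unfold IsClique Set.Pairwise; decide) (by unfold _root_.IsIndepSet; decide)
      (by simp) (by decide) (by decide) (by simp) (by decide)

/-- If `H = (S, K, R)` is a `G`-spider with nonempty head, where `G` is one of
the five separable extension graphs `P_4`, `P` (banner), `F` (chair), `complement(P)` and
`complement(F)` (each with its midpoint and endpoint sets), then `H` is not a minimal
`(1,k)`-polar obstruction. -/
theorem stmt_14 {V : Type*} [Fintype V] (k : ℕ) (H : SimpleGraph V) (S K R : Set V)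
    (h : IsBaseSpider (pathGraph 4) ({1, 2} : Set (Fin 4)) ({0, 3} : Set (Fin 4)) H S K R ∨
         IsBaseSpider banner ({0, 1, 3} : Set (Fin 5)) ({2, 4} : Set (Fin 5)) H S K R ∨
         IsBaseSpider chair ({1, 2} : Set (Fin 5)) ({0, 3, 4} : Set (Fin 5)) H S K R ∨
         IsBaseSpider bannerᶜ ({2, 4} : Set (Fin 5)) ({0, 1, 3} : Set (Fin 5)) H S K R ∨
         IsBaseSpider chairᶜ ({0, 3, 4} : Set (Fin 5)) ({1, 2} : Set (Fin 5)) H S K R)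
    (hR : R.Nonempty) :
    ¬ MinOneKPolarObstruction k H :=
  stmt_14_general k H S K R h hR
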